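/- Let γ ∈ SL(2,ℂ) with ‖γ‖ > 1, with Cartan poles s and n. For α ∈ (0,1): γ maps the closed chordal disc of center s and radius α onto the complement of the open chordal disc D(n, 1/2) if and only if α = √(3/(3 + ‖γ‖⁴)). -/

import Mathlib

/-!
In homogeneous coordinates the chordal distance between `[v]` and `[w]` is
`|det (v, w)| / (‖v‖ ‖w‖)`, so unitary matrices act on ℂP¹ by chordal isometries. The Cartan
decomposition therefore reduces the statement to `a = diag (λ, λ⁻¹)`, `s = 0` and `n = ∞`. In the
affine chart the closed chordal disc of radius `α` about `0` is the Euclidean disc of radius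
`α / √(1 - α²)`, which `a` dilates by `|λ|²`; and since `d(z, 0)² + d(z, ∞)² = 1`, the complement of
`D(∞, 1/2)` is the Euclidean disc of radius `√3`. The image is that complement iff
`|λ|² α / √(1 - α²) = √3`, i.e. `α² = 3 / (3 + |λ|⁴)`, and `‖γ‖ = |λ|` because the unitary factors
do not change the operator norm.
-/

open Complex Set

/-- Chordal distance on ℂP¹ = ℂ ∪ {∞}, modeled as `Option ℂ` (`none` = ∞). -/
noncomputable def chordal : Option ℂ → Option ℂ → ℝ
  | some z₁, some z₂ =>
      ‖z₁ - z₂‖ /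
        (Real.sqrt (1 + ‖z₁‖ ^ 2) * Real.sqrt (1 + ‖z₂‖ ^ 2))
  | some z, none => 1 / Real.sqrt (1 + ‖z‖ ^ 2)
  | none, some z => 1 / Real.sqrt (1 + ‖z‖ ^ 2)
  | none, none => 0

/-- Möbius action of a 2×2 complex matrix on ℂP¹. -/
noncomputable def mobius (g : Matrix (Fin 2) (Fin 2) ℂ) : Option ℂ → Option ℂ
  | some z => if g 1 0 * z + g 1 1 = 0 then none
              else some ((g 0 0 * z + g 0 1) / (g 1 0 * z + g 1 1))
  | none => if g 1 0 = 0 then none else some (g 0 0 / g 1 0)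

/-- Operator norm of a 2×2 complex matrix acting on ℂ² with Euclidean norm. -/
noncomputable def opNorm (g : Matrix (Fin 2) (Fin 2) ℂ) : ℝ :=
  ‖LinearMap.toContinuousLinearMap (Matrix.toEuclideanLin g)‖

/-- Membership in SU(2). -/
def SU2 (k : Matrix (Fin 2) (Fin 2) ℂ) : Prop := k.det = 1 ∧ k.conjTranspose * k = 1

/-- Open chordal disc. -/
def Dopen (z : Option ℂ) (α : ℝ) : Set (Option ℂ) := {w | chordal w z < α}

/-- Closed chordal disc. -/
def Dclosed (z : Option ℂ) (α : ℝ) : Set (Option ℂ) := {w | chordal w z ≤ α}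
abbrev SL2 := Matrix.SpecialLinearGroup (Fin 2) ℂ

open Matrix Metric

lemma div_sqrt_one_add_sq_le_iff {t α : ℝ} (ht : 0 ≤ t) (hα : 0 ≤ α) (hα1 : α < 1) :
    t / √(1 + t ^ 2) ≤ α ↔ t ≤ α / √(1 - α ^ 2) := by
  have h1α : 0 < 1 - α ^ 2 := by nlinarith
  rw [div_le_iff₀ (by positivity), le_div_iff₀ (by positivity),
    ← sq_le_sq₀ ht (by positivity), ← sq_le_sq₀ (by positivity) hα, mul_pow, mul_pow,
    Real.sq_sqrt (by positivity), Real.sq_sqrt h1α.le]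
  constructor <;> intro h <;> linarith

lemma mul_div_sqrt_one_sub_sq_eq_sqrt_iff {a c α : ℝ} (ha : 0 ≤ a) (hc : 0 < c) (hα : 0 ≤ α)
    (hα1 : α < 1) : c * (α / √(1 - α ^ 2)) = √a ↔ α = √(a / (a + c ^ 2)) := by
  have h1α : 0 < 1 - α ^ 2 := by nlinarith
  rw [eq_comm, Real.sqrt_eq_iff_eq_sq ha (by positivity), eq_comm (a := α),
    Real.sqrt_eq_iff_eq_sq (by positivity) hα, mul_pow, div_pow, Real.sq_sqrt h1α.le,
    mul_div_assoc', eq_div_iff h1α.ne', div_eq_iff (by positivity)]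
  constructor <;> intro h <;> linarith

lemma norm_toEuclideanLin_of_mem_unitary {n : Type*} [Fintype n] [DecidableEq n]
    {u : Matrix n n ℂ} (hu : u ∈ unitary (Matrix n n ℂ)) (v : EuclideanSpace ℂ n) :
    ‖toEuclideanLin u v‖ = ‖v‖ :=
  ContinuousLinearMap.norm_map_of_mem_unitary
    (Unitary.map_mem (toEuclideanCLM (n := n) (𝕜 := ℂ)) hu) v

lemma norm_det_of_mem_unitary {n : Type*} [Fintype n] [DecidableEq n] {u : Matrix n n ℂ}
    (hu : u ∈ unitary (Matrix n n ℂ)) : ‖u.det‖ = 1 :=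
  CStarRing.norm_of_mem_unitary (det_of_mem_unitary hu)

lemma det_ne_zero_of_mem_unitary {n : Type*} [Fintype n] [DecidableEq n] {u : Matrix n n ℂ}
    (hu : u ∈ unitary (Matrix n n ℂ)) : u.det ≠ 0 :=
  norm_ne_zero_iff.1 (by rw [norm_det_of_mem_unitary hu]; exact one_ne_zero)

lemma SU2.mem_unitary {k : Matrix (Fin 2) (Fin 2) ℂ} (hk : SU2 k) :
    k ∈ unitary (Matrix (Fin 2) (Fin 2) ℂ) :=
  mem_unitaryGroup_iff'.2 hk.2

open scoped Matrix.Norms.L2Operator in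
lemma opNorm_unitary_mul_diagonal_mul_unitary {k k' : Matrix (Fin 2) (Fin 2) ℂ}
    (hk : k ∈ unitary (Matrix (Fin 2) (Fin 2) ℂ))
    (hk' : k' ∈ unitary (Matrix (Fin 2) (Fin 2) ℂ)) {lam : ℂ} (hlam : 1 ≤ ‖lam‖) :
    opNorm (k * diagonal ![lam, lam⁻¹] * k') = ‖lam‖ := by
  -- `opNorm` is the L² operator norm, which makes the matrices a C⋆-algebra.
  change ‖k * diagonal ![lam, lam⁻¹] * k'‖ = ‖lam‖
  rw [CStarRing.norm_mul_mem_unitary _ hk', CStarRing.norm_mem_unitary_mul _ hk,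
    l2_opNorm_diagonal]
  refine le_antisymm ((pi_norm_le_iff_of_nonneg (norm_nonneg _)).2 fun i => ?_) ?_
  · fin_cases i
    · simp
    · simpa using (inv_le_one_of_one_le₀ hlam).trans hlam
  · simpa using norm_le_pi_norm ![lam, lam⁻¹] 0

noncomputable def projPoint (v : EuclideanSpace ℂ (Fin 2)) : Option ℂ :=
  if v 1 = 0 then none else some (v 0 / v 1)

def homCoords : Option ℂ → EuclideanSpace ℂ (Fin 2)
  | some z => !₂[z, 1]
  | none => !₂[1, 0]

def wedge (v w : EuclideanSpace ℂ (Fin 2)) : ℂ := v 0 * w 1 - v 1 * w 0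

lemma homCoords_ne_zero (z : Option ℂ) : homCoords z ≠ 0 := by
  cases z <;> simp [homCoords, ← WithLp.toLp_zero, funext_iff, Fin.forall_fin_two]

lemma projPoint_homCoords (z : Option ℂ) : projPoint (homCoords z) = z := by
  cases z <;> simp [homCoords, projPoint]

lemma projPoint_smul {c : ℂ} (hc : c ≠ 0) (v : EuclideanSpace ℂ (Fin 2)) :
    projPoint (c • v) = projPoint v := by
  simp [projPoint, hc, mul_div_mul_left]

lemma apply_zero_ne_zero_or_apply_one_ne_zero {v : EuclideanSpace ℂ (Fin 2)} (hv : v ≠ 0) :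
    v 0 ≠ 0 ∨ v 1 ≠ 0 := by
  by_contra! h
  exact hv (by ext i; fin_cases i <;> simp [h.1, h.2])

lemma eq_smul_homCoords_projPoint {v : EuclideanSpace ℂ (Fin 2)} (hv : v ≠ 0) :
    ∃ c : ℂ, c ≠ 0 ∧ v = c • homCoords (projPoint v) := by
  by_cases h1 : v 1 = 0
  · refine ⟨v 0, (apply_zero_ne_zero_or_apply_one_ne_zero hv).resolve_right (not_not.2 h1),
      ?_⟩
    ext i; fin_cases i <;> simp [projPoint, homCoords, h1]
  · refine ⟨v 1, h1, ?_⟩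
    ext i; fin_cases i <;> simp [projPoint, homCoords, h1, mul_div_cancel₀]

lemma wedge_smul (c d : ℂ) (v w : EuclideanSpace ℂ (Fin 2)) :
    wedge (c • v) (d • w) = c * d * wedge v w := by
  simp only [wedge, PiLp.smul_apply, smul_eq_mul]
  ring

lemma chordal_homCoords (z w : Option ℂ) :
    chordal z w = ‖wedge (homCoords z) (homCoords w)‖ / (‖homCoords z‖ * ‖homCoords w‖) := by
  cases z <;> cases w <;> simp [chordal, homCoords, wedge, EuclideanSpace.norm_eq, add_comm]

lemma chordal_projPoint {v w : EuclideanSpace ℂ (Fin 2)} (hv : v ≠ 0) (hw : w ≠ 0) :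
    chordal (projPoint v) (projPoint w) = ‖wedge v w‖ / (‖v‖ * ‖w‖) := by
  obtain ⟨c, hc, hcv⟩ := eq_smul_homCoords_projPoint hv
  obtain ⟨d, hd, hdw⟩ := eq_smul_homCoords_projPoint hw
  rw [hcv, hdw, wedge_smul, norm_mul, norm_mul, norm_smul, norm_smul, projPoint_smul hc,
    projPoint_smul hd, projPoint_homCoords, projPoint_homCoords, chordal_homCoords,
    mul_mul_mul_comm, mul_div_mul_left _ _ (by positivity)]

lemma toEuclideanLin_apply_zero (g : Matrix (Fin 2) (Fin 2) ℂ)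
    (v : EuclideanSpace ℂ (Fin 2)) :
    toEuclideanLin g v 0 = g 0 0 * v 0 + g 0 1 * v 1 := by
  simp [mulVec, dotProduct, Fin.sum_univ_two]

lemma toEuclideanLin_apply_one (g : Matrix (Fin 2) (Fin 2) ℂ)
    (v : EuclideanSpace ℂ (Fin 2)) :
    toEuclideanLin g v 1 = g 1 0 * v 0 + g 1 1 * v 1 := by
  simp [mulVec, dotProduct, Fin.sum_univ_two]

lemma wedge_toEuclideanLin (g : Matrix (Fin 2) (Fin 2) ℂ) (v w : EuclideanSpace ℂ (Fin 2)) :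
    wedge (toEuclideanLin g v) (toEuclideanLin g w) = g.det * wedge v w := by
  simp only [wedge, toEuclideanLin_apply_zero, toEuclideanLin_apply_one, det_fin_two]
  ring

lemma mobius_projPoint (g : Matrix (Fin 2) (Fin 2) ℂ) {v : EuclideanSpace ℂ (Fin 2)}
    (hv : v ≠ 0) : mobius g (projPoint v) = projPoint (toEuclideanLin g v) := by
  rw [projPoint, projPoint, toEuclideanLin_apply_zero, toEuclideanLin_apply_one]
  by_cases h1 : v 1 = 0
  · have h0 : v 0 ≠ 0 :=
      (apply_zero_ne_zero_or_apply_one_ne_zero hv).resolve_right (not_not.2 h1)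
    by_cases hg : g 1 0 = 0
    · simp [mobius, h1, hg]
    · simp [mobius, h1, hg, h0, mul_div_mul_right]
  · have key : g 1 0 * (v 0 / v 1) + g 1 1 = (g 1 0 * v 0 + g 1 1 * v 1) / v 1 := by
      field_simp
    by_cases hd : g 1 0 * v 0 + g 1 1 * v 1 = 0
    · simp [mobius, h1, key, hd]
    · simp only [mobius, h1, key, hd, if_false, div_eq_zero_iff, or_false]
      congr 1
      field_simp

lemma mobius_eq_projPoint (g : Matrix (Fin 2) (Fin 2) ℂ) (z : Option ℂ) :
    mobius g z = projPoint (toEuclideanLin g (homCoords z)) := by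
  rw [← mobius_projPoint g (homCoords_ne_zero z), projPoint_homCoords]

lemma mobius_one (z : Option ℂ) : mobius 1 z = z := by
  cases z <;> simp [mobius]

lemma mobius_mul (g : Matrix (Fin 2) (Fin 2) ℂ) {h : Matrix (Fin 2) (Fin 2) ℂ} (hh : h.det ≠ 0)
    (z : Option ℂ) : mobius (g * h) z = mobius g (mobius h z) := by
  have hhz : toEuclideanLin h (homCoords z) ≠ 0 := fun h0 =>
    homCoords_ne_zero z <| WithLp.ofLp_injective 2 <|
      eq_zero_of_mulVec_eq_zero hh (congrArg WithLp.ofLp h0)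
  rw [mobius_eq_projPoint, mobius_eq_projPoint h, mobius_projPoint g hhz]
  simp

lemma image_mobius_mul (g : Matrix (Fin 2) (Fin 2) ℂ) {h : Matrix (Fin 2) (Fin 2) ℂ}
    (hh : h.det ≠ 0) (S : Set (Option ℂ)) :
    mobius (g * h) '' S = mobius g '' (mobius h '' S) := by
  rw [image_image]
  exact image_congr fun z _ => mobius_mul g hh z

section UnitaryIsometry

variable {u : Matrix (Fin 2) (Fin 2) ℂ}

lemma chordal_mobius_of_mem_unitary (hu : u ∈ unitary (Matrix (Fin 2) (Fin 2) ℂ))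
    (z w : Option ℂ) : chordal (mobius u z) (mobius u w) = chordal z w := by
  have hne : ∀ v, v ≠ 0 → toEuclideanLin u v ≠ 0 := fun v hv => by
    rwa [← norm_ne_zero_iff, norm_toEuclideanLin_of_mem_unitary hu, norm_ne_zero_iff]
  rw [mobius_eq_projPoint, mobius_eq_projPoint,
    chordal_projPoint (hne _ (homCoords_ne_zero z)) (hne _ (homCoords_ne_zero w)),
    wedge_toEuclideanLin, norm_mul, norm_det_of_mem_unitary hu, one_mul,
    norm_toEuclideanLin_of_mem_unitary hu, norm_toEuclideanLin_of_mem_unitary hu,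
    ← chordal_projPoint (homCoords_ne_zero z) (homCoords_ne_zero w), projPoint_homCoords,
    projPoint_homCoords]

lemma mobius_star_mobius (hu : u ∈ unitary (Matrix (Fin 2) (Fin 2) ℂ)) (z : Option ℂ) :
    mobius (star u) (mobius u z) = z := by
  rw [← mobius_mul _ (det_ne_zero_of_mem_unitary hu), Unitary.star_mul_self_of_mem hu,
    mobius_one]

lemma mobius_mobius_star (hu : u ∈ unitary (Matrix (Fin 2) (Fin 2) ℂ)) (z : Option ℂ) :
    mobius u (mobius (star u) z) = z := by
  rw [← mobius_mul _ (det_ne_zero_of_mem_unitary (Unitary.star_mem hu)),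
    Unitary.mul_star_self_of_mem hu, mobius_one]

lemma mobius_injective_of_mem_unitary
    (hu : u ∈ unitary (Matrix (Fin 2) (Fin 2) ℂ)) : Function.Injective (mobius u) :=
  Function.LeftInverse.injective (mobius_star_mobius hu)

lemma image_mobius_setOf_chordal (hu : u ∈ unitary (Matrix (Fin 2) (Fin 2) ℂ)) (c : Option ℂ)
    (P : ℝ → Prop) : mobius u '' {z | P (chordal z c)} = {z | P (chordal z (mobius u c))} := by
  rw [image_eq_preimage_of_inverse (mobius_star_mobius hu) (mobius_mobius_star hu)]
  ext z
  change P _ ↔ P _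
  rw [← chordal_mobius_of_mem_unitary hu, mobius_mobius_star hu]

lemma image_mobius_Dclosed (hu : u ∈ unitary (Matrix (Fin 2) (Fin 2) ℂ)) (c : Option ℂ)
    (β : ℝ) : mobius u '' Dclosed c β = Dclosed (mobius u c) β :=
  image_mobius_setOf_chordal hu c (· ≤ β)

lemma image_mobius_compl_Dopen (hu : u ∈ unitary (Matrix (Fin 2) (Fin 2) ℂ)) (c : Option ℂ)
    (β : ℝ) : mobius u '' (Dopen c β)ᶜ = (Dopen (mobius u c) β)ᶜ :=
  image_mobius_setOf_chordal hu c (¬ · < β)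

end UnitaryIsometry

lemma chordal_nonneg (z w : Option ℂ) : 0 ≤ chordal z w := by
  cases z <;> cases w <;> simp only [chordal] <;> positivity

lemma chordal_zero_sq_add_chordal_infty_sq (z : Option ℂ) :
    chordal z (some 0) ^ 2 + chordal z none ^ 2 = 1 := by
  cases z with
  | none => simp [chordal]
  | some z =>
    simp only [chordal, sub_zero, norm_zero]
    rw [div_pow, div_pow, mul_pow, Real.sq_sqrt (by positivity), Real.sq_sqrt (by positivity)]
    field_simp
    ring

lemma compl_Dopen_infty {β : ℝ} (hβ : 0 ≤ β) (hβ1 : β ≤ 1) :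
    (Dopen none β)ᶜ = Dclosed (some 0) √(1 - β ^ 2) := by
  ext z
  change ¬ chordal z none < β ↔ chordal z (some 0) ≤ √(1 - β ^ 2)
  rw [not_lt, Real.le_sqrt (chordal_nonneg _ _) (by nlinarith),
    ← sq_le_sq₀ hβ (chordal_nonneg _ _)]
  have := chordal_zero_sq_add_chordal_infty_sq z
  constructor <;> intro h <;> linarith

lemma Dclosed_zero {α : ℝ} (hα : 0 ≤ α) (hα1 : α < 1) :
    Dclosed (some 0) α = some '' closedBall 0 (α / √(1 - α ^ 2)) := by
  ext z
  cases z with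
  | none => simpa [Dclosed, chordal] using hα1
  | some z =>
    change chordal (some z) (some 0) ≤ α ↔ _
    rw [(Option.some_injective ℂ).mem_set_image, mem_closedBall_zero_iff,
      ← div_sqrt_one_add_sq_le_iff (norm_nonneg z) hα hα1]
    simp [chordal]

lemma compl_Dopen_infty_half : (Dopen none (1 / 2))ᶜ = some '' closedBall 0 √3 := by
  have h34 : (1 : ℝ) - (1 / 2) ^ 2 = 3 / 2 ^ 2 := by norm_num
  rw [compl_Dopen_infty (by norm_num) (by norm_num), Dclosed_zero (Real.sqrt_nonneg _)
    (by rw [h34, Real.sqrt_lt' one_pos]; norm_num), Real.sq_sqrt (by norm_num), h34,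
    show (1 : ℝ) - 3 / 2 ^ 2 = (1 / 2) ^ 2 by norm_num, Real.sqrt_sq (by norm_num),
    Real.sqrt_div (by norm_num), Real.sqrt_sq (by norm_num)]
  ring_nf

lemma image_some_closedBall_zero_inj {r r' : ℝ} (hr : 0 ≤ r) (hr' : 0 ≤ r') :
    some '' closedBall (0 : ℂ) r = some '' closedBall 0 r' ↔ r = r' := by
  have radius_le : ∀ {a b : ℝ}, 0 ≤ a → closedBall (0 : ℂ) a ⊆ closedBall 0 b → a ≤ b :=
    fun ha h => by simpa [abs_of_nonneg ha] using h (show _ ∈ closedBall 0 _ from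
      mem_closedBall_zero_iff.2 (Complex.norm_of_nonneg ha).le)
  rw [(Option.some_injective ℂ).image_injective.eq_iff]
  exact ⟨fun h => le_antisymm (radius_le hr h.le) (radius_le hr' h.ge), fun h => h ▸ rfl⟩

lemma mobius_diagonal_some {lam : ℂ} (hlam : lam ≠ 0) (z : ℂ) :
    mobius (diagonal ![lam, lam⁻¹]) (some z) = some (lam ^ 2 * z) := by
  simp [mobius, hlam, sq, mul_right_comm _ z]

lemma image_mobius_diagonal_closedBall {lam : ℂ} (hlam : lam ≠ 0) (r : ℝ) :
    mobius (diagonal ![lam, lam⁻¹]) '' (some '' closedBall 0 r) =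
      some '' closedBall 0 (‖lam‖ ^ 2 * r) := by
  rw [image_image]
  simp only [mobius_diagonal_some hlam]
  rw [← image_image (g := some) (f := (lam ^ 2 * ·))]
  simp only [← smul_eq_mul, image_smul, smul_closedBall' (pow_ne_zero 2 hlam), smul_zero,
    norm_pow]

theorem sl2_image_closed_disc_iff_general (γ : SL2)
    (k k' : Matrix (Fin 2) (Fin 2) ℂ) (lam : ℂ)
    (hk : SU2 k) (hk' : SU2 k') (hlam : 1 ≤ ‖lam‖)
    (hdec : (↑γ : Matrix (Fin 2) (Fin 2) ℂ) = k * Matrix.diagonal ![lam, lam⁻¹] * k')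
    (s n : Option ℂ) (hs : s = mobius k'⁻¹ (some 0)) (hn : n = mobius k none)
    (α : ℝ) (hα : α ∈ Set.Ioo (0:ℝ) 1) :
    mobius ↑γ '' Dclosed s α = (Dopen n (1/2))ᶜ ↔
      α = Real.sqrt (3 / (3 + opNorm ↑γ ^ 4)) := by
  obtain ⟨hα0, hα1⟩ := hα
  have hlam0 : lam ≠ 0 := norm_ne_zero_iff.1 (one_pos.trans_le hlam).ne'
  have hk's : mobius k' s = some 0 := by
    rw [hs, ← mobius_mul _ (by simp [hk'.1]), mul_nonsing_inv _ (by simp [hk'.1]), mobius_one]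
  have hnorm : opNorm ↑γ = ‖lam‖ :=
    hdec ▸ opNorm_unitary_mul_diagonal_mul_unitary hk.mem_unitary hk'.mem_unitary hlam
  have hreduce : mobius ↑γ '' Dclosed s α = (Dopen n (1/2))ᶜ ↔
      mobius (diagonal ![lam, lam⁻¹]) '' Dclosed (some 0) α = (Dopen none (1/2))ᶜ := by
    rw [hdec, image_mobius_mul _ (det_ne_zero_of_mem_unitary hk'.mem_unitary),
      image_mobius_mul _ (by simp [hlam0]), image_mobius_Dclosed hk'.mem_unitary, hk's, hn,
      ← image_mobius_compl_Dopen hk.mem_unitary,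
      (mobius_injective_of_mem_unitary hk.mem_unitary).image_injective.eq_iff]
  rw [hreduce, hnorm, Dclosed_zero hα0.le hα1, image_mobius_diagonal_closedBall hlam0,
    compl_Dopen_infty_half, image_some_closedBall_zero_inj (by positivity) (by positivity),
    mul_div_sqrt_one_sub_sq_eq_sqrt_iff (by norm_num) (by positivity) hα0.le hα1, ← pow_mul]

theorem sl2_image_closed_disc_iff (γ : SL2) (hγ : 1 < opNorm ↑γ)
    (k k' : Matrix (Fin 2) (Fin 2) ℂ) (lam : ℂ)
    (hk : SU2 k) (hk' : SU2 k') (hlam : 1 ≤ ‖lam‖)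
    (hdec : (↑γ : Matrix (Fin 2) (Fin 2) ℂ) = k * Matrix.diagonal ![lam, lam⁻¹] * k')
    (s n : Option ℂ) (hs : s = mobius k'⁻¹ (some 0)) (hn : n = mobius k none)
    (α : ℝ) (hα : α ∈ Set.Ioo (0:ℝ) 1) :
    mobius ↑γ '' Dclosed s α = (Dopen n (1/2))ᶜ ↔
      α = Real.sqrt (3 / (3 + opNorm ↑γ ^ 4)) :=
  sl2_image_closed_disc_iff_general γ k k' lam hk hk' hlam hdec s n hs hn α hα
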